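/- For every Boolean function f: {0,1}^n → {0,1}, there exists a restriction ρ with |ρ^{-1}(*)| = O(R(f)) such that R(f|_ρ) = Ω(R(f)^{1/3}), where R denotes bounded-error randomized query complexity. -/

import Mathlib

open Finset

section Core
variable {ι : Type} [Fintype ι] [DecidableEq ι]

/-- Flip the bits of `x` indexed by the block `B`. -/
def flipSet (x : ι → Bool) (B : Finset ι) : ι → Bool :=
  fun i => if i ∈ B then !(x i) else x i

/-- Sensitivity of `f` at input `x`. -/
def sensAt (f : (ι → Bool) → Bool) (x : ι → Bool) : ℕ :=
  (univ.filter fun i => f (flipSet x {i}) ≠ f x).card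

/-- Sensitivity of `f`. -/
def sens (f : (ι → Bool) → Bool) : ℕ :=
  univ.sup fun x => sensAt f x

/-- Block sensitivity of `f` at `x`: the maximal number of pairwise disjoint
sensitive blocks at `x`. -/
noncomputable def bsAt (f : (ι → Bool) → Bool) (x : ι → Bool) : ℕ :=
  sSup {r | ∃ B : Fin r → Finset ι,
    (∀ j, f (flipSet x (B j)) ≠ f x) ∧
    ∀ j₁ j₂, j₁ ≠ j₂ → Disjoint (B j₁) (B j₂)}

/-- Block sensitivity of `f`. -/
noncomputable def blockSens (f : (ι → Bool) → Bool) : ℕ :=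
  univ.sup fun x => bsAt f x

/-- `S` is a certificate for `f` at `x`: every input agreeing with `x` on `S`
 has the same `f`-value as `x`. -/
def IsCert (f : (ι → Bool) → Bool) (x : ι → Bool) (S : Finset ι) : Prop :=
  ∀ y : ι → Bool, (∀ i ∈ S, y i = x i) → f y = f x

/-- Certificate complexity of `f` at `x`. -/
noncomputable def certAt (f : (ι → Bool) → Bool) (x : ι → Bool) : ℕ :=
  sInf {c | ∃ S : Finset ι, S.card = c ∧ IsCert f x S}

/-- Certificate complexity of `f`. -/
noncomputable def certC (f : (ι → Bool) → Bool) : ℕ :=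
  univ.sup fun x => certAt f x

/-- 0-certificate complexity of `f`. -/
noncomputable def cert0 (f : (ι → Bool) → Bool) : ℕ :=
  (univ.filter fun x => f x = false).sup fun x => certAt f x

/-- 1-certificate complexity of `f`. -/
noncomputable def cert1 (f : (ι → Bool) → Bool) : ℕ :=
  (univ.filter fun x => f x = true).sup fun x => certAt f x

/-- The restriction of `f` by the partial assignment `ρ` (a variable `i` with
`ρ i = none` is left unset; otherwise it is fixed to the given value). The
restricted function depends only on the unset variables. -/
def restrictBF (f : (ι → Bool) → Bool) (ρ : ι → Option Bool) : (ι → Bool) → Bool :=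
  fun x => f fun i => (ρ i).getD (x i)

/-- Number of unset variables of a partial assignment. -/
def unsetCard (ρ : ι → Option Bool) : ℕ :=
  (univ.filter fun i => ρ i = none).card

end Core

/-- Deterministic decision trees over variables indexed by `ι`. -/
inductive DTree (ι : Type) where
  | leaf : Bool → DTree ι
  | node : ι → DTree ι → DTree ι → DTree ι

/-- Evaluation of a decision tree on an input. -/
def DTree.eval {ι : Type} : DTree ι → (ι → Bool) → Bool
  | .leaf b, _ => b
  | .node i t0 t1, x => if x i then t1.eval x else t0.eval x

/-- Depth (worst-case number of queries) of a decision tree. -/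
def DTree.depth {ι : Type} : DTree ι → ℕ
  | .leaf _ => 0
  | .node _ t0 t1 => max t0.depth t1.depth + 1

/-- Deterministic query (decision tree) complexity. -/
noncomputable def Dquery {ι : Type} (f : (ι → Bool) → Bool) : ℕ :=
  sInf {d | ∃ T : DTree ι, T.depth ≤ d ∧ ∀ x, T.eval x = f x}

open scoped ENNReal

/-- Bounded-error randomized query complexity: least `d` such that some
probability distribution over decision trees of depth at most `d` computes `f`
with success probability at least `2/3` on every input. -/
noncomputable def Rquery {ι : Type} [Fintype ι] [DecidableEq ι]
    (f : (ι → Bool) → Bool) : ℕ :=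
  sInf {d | ∃ μ : PMF (DTree ι),
    (∀ T ∈ μ.support, T.depth ≤ d) ∧
    ∀ x, (2 / 3 : ℝ≥0∞) ≤ ∑' T : DTree ι, if T.eval x = f x then μ T else 0}

/-!
Let `R = R(f)` and `T = R^{1/3}`. Nisan's argument bounds by `3R` the size of every family of
disjoint sensitive blocks, and it still applies after fixing all variables outside the blocks;
on the other hand `R ≤ D ≤ bs³`. If `s(f) ≥ T`, keep free only the sensitive bits of a most
sensitive input: at most `3R` variables, and the restriction still has sensitivity `s(f)`.
Otherwise every minimal sensitive block has fewer than `T` bits while `bs(f) ≥ T`, so `⌈T⌉`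
disjoint minimal blocks of a maximally block-sensitive input span at most `(T + 1) T ≤ 2R`
variables and keep block sensitivity `⌈T⌉`. Either way `R(f|ρ) ≥ T / 3`.
-/

open Function

section SensitiveBlocks

variable {ι : Type} [DecidableEq ι]

section Flip

variable {x : ι → Bool} {B : Finset ι} {i : ι}

@[simp] lemma flipSet_empty (x : ι → Bool) : flipSet x ∅ = x := by
  funext i; simp [flipSet]

lemma flipSet_of_notMem (h : i ∉ B) : flipSet x B i = x i := if_neg h

lemma flipSet_flipSet_singleton (h : i ∈ B) :
    flipSet (flipSet x B) {i} = flipSet x (B.erase i) := by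
  funext j
  by_cases hji : j = i
  · subst hji
    simp [flipSet, h]
  · simp [flipSet, hji]

lemma flipSet_piecewise_sdiff (S : Finset ι) (x y : ι → Bool) :
    flipSet (S.piecewise x y) (B \ S) = S.piecewise x (flipSet y B) := by
  funext i
  by_cases hi : i ∈ S <;> simp [flipSet, Finset.piecewise, hi]

lemma flipSet_filter_ne_apply_of_mem {S : Finset ι} (x y : ι → Bool) (hi : i ∈ S) :
    flipSet x (S.filter fun i => y i ≠ x i) i = y i := by
  cases hx : x i <;> cases hy : y i <;> simp [flipSet, hi, hx, hy]

end Flip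

def fixOn (x : ι → Bool) (S : Finset ι) : ι → Option Bool :=
  fun i => if i ∈ S then some (x i) else none

lemma restrictBF_fixOn (f : (ι → Bool) → Bool) (x : ι → Bool) (S : Finset ι) (y : ι → Bool) :
    restrictBF f (fixOn x S) y = f (S.piecewise x y) := by
  simp only [restrictBF]
  congr 1; funext i
  by_cases hi : i ∈ S <;> simp [fixOn, Finset.piecewise, hi]

structure IsSensFamily (f : (ι → Bool) → Bool) (x : ι → Bool) {r : ℕ} (B : Fin r → Finset ι) :
    Prop where
  sensitive : ∀ j, f (flipSet x (B j)) ≠ f x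
  pairwiseDisjoint : Pairwise (Disjoint on B)

section Sensitivity

variable {f : (ι → Bool) → Bool} {x : ι → Bool} {r : ℕ} {B : Fin r → Finset ι}

namespace IsSensFamily

lemma snoc (h : IsSensFamily f x B) {D : Finset ι} (hD : f (flipSet x D) ≠ f x)
    (hdisj : ∀ j, Disjoint (B j) D) : IsSensFamily f x (Fin.snoc B D : Fin (r + 1) → Finset ι) := by
  constructor
  · intro j
    induction j using Fin.lastCases with
    | last => simpa using hD
    | cast j => simpa using h.sensitive j
  · intro j₁ j₂ hne
    induction j₁ using Fin.lastCases with
    | last =>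
      induction j₂ using Fin.lastCases with
      | last => exact absurd rfl hne
      | cast j₂ => simpa [onFun] using (hdisj j₂).symm
    | cast j₁ =>
      induction j₂ using Fin.lastCases with
      | last => simpa [onFun] using hdisj j₁
      | cast j₂ => simpa [onFun] using h.pairwiseDisjoint fun hj => hne (congrArg _ hj)

lemma of_subset {B' : Fin r → Finset ι} (h : IsSensFamily f x B)
    (hB' : ∀ j, f (flipSet x (B' j)) ≠ f x) (hsub : ∀ j, B' j ⊆ B j) : IsSensFamily f x B' :=
  ⟨hB', fun _ _ hne => (h.pairwiseDisjoint hne).mono (hsub _) (hsub _)⟩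

lemma comp_castLE {k : ℕ} (h : IsSensFamily f x B) (hk : k ≤ r) :
    IsSensFamily f x (B ∘ Fin.castLE hk) :=
  ⟨fun _ => h.sensitive _, h.pairwiseDisjoint.comp_of_injective (Fin.castLE_injective hk)⟩

end IsSensFamily

lemma isSensFamily_singletons {S : Finset ι} (hS : ∀ i ∈ S, f (flipSet x {i}) ≠ f x) :
    IsSensFamily f x fun j : Fin S.card => {(S.equivFin.symm j : ι)} :=
  ⟨fun j => hS _ (S.equivFin.symm j).2, fun _ _ hne => Finset.disjoint_singleton.2
    fun hc => hne (S.equivFin.symm.injective (Subtype.ext hc))⟩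

variable [Fintype ι]

namespace IsSensFamily

lemma card_le (h : IsSensFamily f x B) : r ≤ Fintype.card ι := by
  have hne : ∀ j, (B j).Nonempty := fun j =>
    Finset.nonempty_iff_ne_empty.2 fun h0 => h.sensitive j (by rw [h0, flipSet_empty])
  choose b hb using hne
  have hinj : Injective b := fun j₁ j₂ hj => by
    by_contra hne
    exact Finset.disjoint_left.mp (h.pairwiseDisjoint hne) (hb j₁) (hj ▸ hb j₂)
  simpa using Fintype.card_le_of_injective b hinj

lemma le_bsAt (h : IsSensFamily f x B) : r ≤ bsAt f x :=
  le_csSup ⟨Fintype.card ι, fun _ ⟨_, h₁, h₂⟩ => card_le ⟨h₁, fun _ _ => h₂ _ _⟩⟩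
    ⟨B, h.sensitive, fun _ _ hne => h.pairwiseDisjoint hne⟩

lemma le_blockSens (h : IsSensFamily f x B) : r ≤ blockSens f :=
  h.le_bsAt.trans (Finset.le_sup (Finset.mem_univ x))

lemma restrict {U : Finset ι} (h : IsSensFamily f x B) (hU : ∀ j, B j ⊆ U) :
    IsSensFamily (restrictBF f (fixOn x Uᶜ)) x B := by
  have hfix : ∀ {y : ι → Bool}, (∀ i ∉ U, y i = x i) → Uᶜ.piecewise x y = y := fun hy =>
    funext fun i => by by_cases hi : i ∈ U <;> simp [Finset.piecewise, hi, hy]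
  refine ⟨fun j => ?_, h.pairwiseDisjoint⟩
  rw [restrictBF_fixOn, restrictBF_fixOn, hfix fun _ _ => rfl,
    hfix fun i hi => flipSet_of_notMem fun hiB => hi (hU j hiB)]
  exact h.sensitive j

end IsSensFamily

lemma flipSet_filter_ne (x y : ι → Bool) : flipSet x {i | y i ≠ x i} = y :=
  funext fun _ => flipSet_filter_ne_apply_of_mem x y (mem_univ _)

lemma unsetCard_fixOn_compl (x : ι → Bool) (U : Finset ι) : unsetCard (fixOn x Uᶜ) = U.card := by
  unfold unsetCard fixOn
  congr 1
  ext i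
  by_cases hi : i ∈ U <;> simp [hi]

lemma exists_isSensFamily_bsAt (f : (ι → Bool) → Bool) (x : ι → Bool) :
    ∃ B : Fin (bsAt f x) → Finset ι, IsSensFamily f x B := by
  obtain ⟨B, h₁, h₂⟩ := Nat.sSup_mem (s := {r | ∃ B : Fin r → Finset ι,
      (∀ j, f (flipSet x (B j)) ≠ f x) ∧ ∀ j₁ j₂, j₁ ≠ j₂ → Disjoint (B j₁) (B j₂)})
    ⟨0, finZeroElim, finZeroElim, finZeroElim⟩
    ⟨Fintype.card ι, fun _ ⟨_, h₁, h₂⟩ => IsSensFamily.card_le ⟨h₁, fun _ _ => h₂ _ _⟩⟩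
  exact ⟨B, h₁, fun _ _ => h₂ _ _⟩

lemma sensAt_le_sens (f : (ι → Bool) → Bool) (x : ι → Bool) : sensAt f x ≤ sens f :=
  Finset.le_sup (Finset.mem_univ x)

lemma exists_sensAt_eq_sens (f : (ι → Bool) → Bool) : ∃ x, sensAt f x = sens f := by
  obtain ⟨x, -, hx⟩ := Finset.exists_mem_eq_sup Finset.univ Finset.univ_nonempty (sensAt f)
  exact ⟨x, hx.symm⟩

lemma sens_le_blockSens (f : (ι → Bool) → Bool) : sens f ≤ blockSens f := by
  obtain ⟨x, hx⟩ := exists_sensAt_eq_sens f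
  rw [← hx]
  exact (isSensFamily_singletons (f := f) (x := x) (S := {i | f (flipSet x {i}) ≠ f x})
    (by simp)).le_blockSens

/-- Every bit of a minimal sensitive block `B` is sensitive at `x ⊕ B`. -/
lemma card_le_sens_of_minimal {B : Finset ι} (h : f (flipSet x B) ≠ f x)
    (hmin : ∀ C ⊂ B, f (flipSet x C) = f x) : B.card ≤ sens f := by
  refine le_trans (Finset.card_le_card fun i hi => ?_) (sensAt_le_sens f (flipSet x B))
  rw [Finset.mem_filter, flipSet_flipSet_singleton hi, hmin _ (Finset.erase_ssubset hi)]
  exact ⟨Finset.mem_univ i, Ne.symm h⟩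

lemma exists_subset_card_le_sens {B : Finset ι} (h : f (flipSet x B) ≠ f x) :
    ∃ B' ⊆ B, f (flipSet x B') ≠ f x ∧ B'.card ≤ sens f := by
  induction B using Finset.strongInduction with
  | H B ih =>
    by_cases hmin : ∀ C ⊂ B, f (flipSet x C) = f x
    · exact ⟨B, subset_rfl, h, card_le_sens_of_minimal h hmin⟩
    · push Not at hmin
      obtain ⟨C, hCB, hC⟩ := hmin
      obtain ⟨B', hB'C, hB'⟩ := ih C hCB hC
      exact ⟨B', hB'C.trans hCB.subset, hB'⟩

lemma exists_isSensFamily_bsAt_card_le_sens (f : (ι → Bool) → Bool) (x : ι → Bool) :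
    ∃ B : Fin (bsAt f x) → Finset ι, IsSensFamily f x B ∧ ∀ j, (B j).card ≤ sens f := by
  obtain ⟨B, hB⟩ := exists_isSensFamily_bsAt f x
  choose B' hsub hsens hcard using fun j => exists_subset_card_le_sens (hB.sensitive j)
  exact ⟨B', hB.of_subset hsens hsub, hcard⟩

end Sensitivity

end SensitiveBlocks

section Certificates

variable {ι : Type} {f g : (ι → Bool) → Bool} {x : ι → Bool}

lemma certAt_le_card {S : Finset ι} (h : IsCert f x S) : certAt f x ≤ S.card :=
  Nat.sInf_le ⟨S, rfl, h⟩

variable [Fintype ι]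

lemma exists_isCert_card_eq_certAt (f : (ι → Bool) → Bool) (x : ι → Bool) :
    ∃ S : Finset ι, S.card = certAt f x ∧ IsCert f x S :=
  Nat.sInf_mem (s := {c | ∃ S : Finset ι, S.card = c ∧ IsCert f x S})
    ⟨_, univ, rfl, fun _ hy => congrArg f (funext fun i => hy i (mem_univ i))⟩

variable [DecidableEq ι]

lemma bsAt_le_blockSens (f : (ι → Bool) → Bool) (x : ι → Bool) : bsAt f x ≤ blockSens f :=
  Finset.le_sup (Finset.mem_univ x)

lemma bsAt_pos_of_ne {y : ι → Bool} (h : f y ≠ f x) : 0 < bsAt f x :=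
  IsSensFamily.le_bsAt (B := fun _ : Fin 1 => {i | y i ≠ x i})
    ⟨fun _ => by rwa [flipSet_filter_ne], fun j₁ j₂ hne => absurd (Subsingleton.elim j₁ j₂) hne⟩

/-- A disagreement with `x` outside the blocks of a maximum family would be one more block. -/
lemma IsSensFamily.isCert_biUnion {B : Fin (bsAt f x) → Finset ι} (hB : IsSensFamily f x B) :
    IsCert f x (univ.biUnion B) := by
  intro y hy
  by_contra hne
  have hD : f (flipSet x {i | y i ≠ x i}) ≠ f x := by rwa [flipSet_filter_ne]
  have hdisj : ∀ j, Disjoint (B j) ({i | y i ≠ x i} : Finset ι) := fun j =>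
    Finset.disjoint_left.2 fun i hi hyi =>
      (Finset.mem_filter.1 hyi).2 (hy i (Finset.mem_biUnion.2 ⟨j, mem_univ j, hi⟩))
  have := (hB.snoc hD hdisj).le_bsAt
  omega

lemma certAt_le_blockSens_mul_sens (f : (ι → Bool) → Bool) (x : ι → Bool) :
    certAt f x ≤ blockSens f * sens f := by
  obtain ⟨B, hB, hcard⟩ := exists_isSensFamily_bsAt_card_le_sens f x
  calc certAt f x ≤ (univ.biUnion B).card := certAt_le_card hB.isCert_biUnion
    _ ≤ ∑ j, (B j).card := card_biUnion_le
    _ ≤ ∑ _j : Fin (bsAt f x), sens f := sum_le_sum fun j _ => hcard j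
    _ = bsAt f x * sens f := by simp
    _ ≤ blockSens f * sens f := Nat.mul_le_mul_right _ (bsAt_le_blockSens f x)

lemma certAt_restrictBF_fixOn_le (g : (ι → Bool) → Bool) (x : ι → Bool) (S : Finset ι)
    (y : ι → Bool) : certAt (restrictBF g (fixOn x S)) y ≤ certAt g (S.piecewise x y) := by
  obtain ⟨C, hC, hcert⟩ := exists_isCert_card_eq_certAt g (S.piecewise x y)
  refine hC ▸ certAt_le_card fun y' hy' => ?_
  rw [restrictBF_fixOn, restrictBF_fixOn]
  exact hcert _ fun i hi => by by_cases hiS : i ∈ S <;> simp [Finset.piecewise, hiS, hy' i hi]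

/-- The bits of `S` where the input differs from `z` form one more sensitive block, disjoint from
the blocks of the restriction. -/
lemma bsAt_restrictBF_fixOn_lt {z : ι → Bool} {S : Finset ι} (hz : g z = true)
    (hS : IsCert g z S) (x y : ι → Bool) (hy : restrictBF g (fixOn x S) y = false) :
    bsAt (restrictBF g (fixOn x S)) y < bsAt g (S.piecewise x y) := by
  rw [restrictBF_fixOn] at hy
  obtain ⟨B, hB⟩ := exists_isSensFamily_bsAt (restrictBF g (fixOn x S)) y
  have hBS : IsSensFamily g (S.piecewise x y) fun j => B j \ S :=
    ⟨fun j => by simpa [restrictBF_fixOn, flipSet_piecewise_sdiff] using hB.sensitive j,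
      fun _ _ hne => (hB.pairwiseDisjoint hne).mono sdiff_subset sdiff_subset⟩
  have hD : g (flipSet (S.piecewise x y) (S.filter fun i => z i ≠ S.piecewise x y i)) ≠
      g (S.piecewise x y) := by
    rw [hy, hS _ fun i hi => flipSet_filter_ne_apply_of_mem _ z hi, hz]
    simp
  exact (hBS.snoc hD fun _ => disjoint_of_subset_right (filter_subset _ _) sdiff_disjoint).le_bsAt

end Certificates

namespace DTree

variable {ι : Type} [DecidableEq ι]

def queryList : List ι → (ι → Bool) → ((ι → Bool) → DTree ι) → DTree ι
  | [], a, F => F a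
  | i :: l, a, F => .node i (queryList l (Function.update a i false) F)
      (queryList l (Function.update a i true) F)

lemma depth_queryList_le {d : ℕ} {F : (ι → Bool) → DTree ι} (hF : ∀ a, (F a).depth ≤ d) :
    ∀ (l : List ι) (a : ι → Bool), (queryList l a F).depth ≤ l.length + d
  | [], a => by simpa [queryList] using hF a
  | i :: l, a => by
    have h₀ := depth_queryList_le hF l (Function.update a i false)
    have h₁ := depth_queryList_le hF l (Function.update a i true)
    simp only [queryList, depth, List.length_cons]
    omega

lemma eval_queryList (F : (ι → Bool) → DTree ι) (x : ι → Bool) :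
    ∀ (l : List ι) (a : ι → Bool), (queryList l a F).eval x = (F (l.toFinset.piecewise x a)).eval x
  | [], a => by simp only [queryList]; congr
  | i :: l, a => by
    have key : l.toFinset.piecewise x (Function.update a i (x i)) =
        (i :: l).toFinset.piecewise x a := by
      funext j
      by_cases hj : j ∈ l <;> by_cases hji : j = i <;> simp [Finset.piecewise, hj, hji]
    cases hx : x i <;> simp [queryList, eval, hx, eval_queryList F x l, ← key]

def queries : DTree ι → (ι → Bool) → Finset ι
  | .leaf _, _ => ∅
  | .node i t0 t1, x => insert i (if x i then t1.queries x else t0.queries x)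

lemma card_queries_le_depth (T : DTree ι) (x : ι → Bool) : (T.queries x).card ≤ T.depth := by
  induction T with
  | leaf b => simp [queries, depth]
  | node i t0 t1 ih0 ih1 =>
    refine (card_insert_le _ _).trans ?_
    split_ifs <;> simp only [depth] <;> omega

lemma eval_flipSet_of_disjoint (T : DTree ι) (x : ι → Bool) {B : Finset ι}
    (h : Disjoint B (T.queries x)) : T.eval (flipSet x B) = T.eval x := by
  induction T with
  | leaf b => rfl
  | node i t0 t1 ih0 ih1 =>
    simp only [queries, disjoint_insert_right] at h
    simp only [eval, flipSet_of_notMem h.1]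
    split_ifs with hxi
    · exact ih1 (by simpa [hxi] using h.2)
    · exact ih0 (by simpa [hxi] using h.2)

end DTree

section QueryComplexity

variable {ι : Type} {f : (ι → Bool) → Bool}

lemma exists_pmf_of_dtree {T : DTree ι} (hT : ∀ x, T.eval x = f x) :
    ∃ μ : PMF (DTree ι), (∀ T' ∈ μ.support, T'.depth ≤ T.depth) ∧
      ∀ x, (2 / 3 : ℝ≥0∞) ≤ ∑' T' : DTree ι, if T'.eval x = f x then μ T' else 0 := by
  refine ⟨PMF.pure T, by simp, fun x => ?_⟩
  rw [tsum_eq_single T fun T' hne => by simp [hne], PMF.pure_apply_self, if_pos (hT x)]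
  exact ENNReal.div_le_of_le_mul (by norm_num)

variable [Fintype ι] [DecidableEq ι]

/-- Query a 1-certificate and recurse on the restriction, whose 0-inputs have smaller block
sensitivity. -/
lemma exists_dtree_depth_le (c k : ℕ) (g : (ι → Bool) → Bool)
    (hbs : ∀ x, g x = false → bsAt g x ≤ k) (hcert : ∀ x, g x = true → certAt g x ≤ c) :
    ∃ T : DTree ι, (∀ x, T.eval x = g x) ∧ T.depth ≤ k * c := by
  induction k generalizing g with
  | zero =>
    by_cases h : ∀ x, g x = true
    · exact ⟨.leaf true, fun x => (h x).symm, Nat.zero_le _⟩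
    obtain ⟨x₀, hx₀⟩ : ∃ x, g x = false := by simpa using h
    refine ⟨.leaf false, fun y => ?_, Nat.zero_le _⟩
    by_contra hy
    have := bsAt_pos_of_ne (f := g) (x := x₀) (y := y) (by rw [hx₀]; exact Ne.symm hy)
    have := hbs x₀ hx₀
    omega
  | succ k ih =>
    by_cases h : ∀ x, g x = false
    · exact ⟨.leaf false, fun x => (h x).symm, Nat.zero_le _⟩
    obtain ⟨z, hz⟩ : ∃ z, g z = true := by simpa using h
    obtain ⟨S, hScard, hS⟩ := exists_isCert_card_eq_certAt g z
    have hsub : ∀ a, ∃ T : DTree ι,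
        (∀ y, T.eval y = restrictBF g (fixOn a S) y) ∧ T.depth ≤ k * c := by
      intro a
      refine ih _ (fun y hy => ?_) fun y hy => ?_
      · have hlt := bsAt_restrictBF_fixOn_lt hz hS a y hy
        rw [restrictBF_fixOn] at hy
        exact Nat.lt_succ_iff.1 (hlt.trans_le (hbs _ hy))
      · rw [restrictBF_fixOn] at hy
        exact (certAt_restrictBF_fixOn_le g a S y).trans (hcert _ hy)
    choose F hF hFd using hsub
    refine ⟨DTree.queryList S.toList (fun _ => false) F, fun x => ?_, ?_⟩
    · rw [DTree.eval_queryList, toList_toFinset, hF, restrictBF_fixOn, piecewise_idem_left,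
        piecewise_same]
    · have := hcert z hz
      calc _ ≤ S.toList.length + k * c := DTree.depth_queryList_le hFd _ _
        _ ≤ (k + 1) * c := by rw [length_toList, hScard, Nat.succ_mul]; omega

lemma exists_dtree_depth_le_blockSens_pow (f : (ι → Bool) → Bool) :
    ∃ T : DTree ι, (∀ x, T.eval x = f x) ∧ T.depth ≤ blockSens f ^ 3 := by
  obtain ⟨T, hT, hd⟩ := exists_dtree_depth_le (blockSens f * blockSens f) (blockSens f) f
    (fun x _ => bsAt_le_blockSens f x)
    fun x _ => (certAt_le_blockSens_mul_sens f x).trans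
      (Nat.mul_le_mul_left _ (sens_le_blockSens f))
  exact ⟨T, hT, hd.trans_eq (by ring)⟩

lemma Rquery_le_blockSens_pow (f : (ι → Bool) → Bool) : Rquery f ≤ blockSens f ^ 3 :=
  let ⟨_, hT, hd⟩ := exists_dtree_depth_le_blockSens_pow f
  (Nat.sInf_le (exists_pmf_of_dtree hT)).trans hd

lemma exists_pmf_Rquery (f : (ι → Bool) → Bool) :
    ∃ μ : PMF (DTree ι), (∀ T ∈ μ.support, T.depth ≤ Rquery f) ∧
      ∀ x, (2 / 3 : ℝ≥0∞) ≤ ∑' T : DTree ι, if T.eval x = f x then μ T else 0 := by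
  obtain ⟨_, hT, -⟩ := exists_dtree_depth_le_blockSens_pow f
  exact Nat.sInf_mem (s := {d | ∃ μ : PMF (DTree ι), (∀ T ∈ μ.support, T.depth ≤ d) ∧
    ∀ x, (2 / 3 : ℝ≥0∞) ≤ ∑' T : DTree ι, if T.eval x = f x then μ T else 0})
    ⟨_, exists_pmf_of_dtree hT⟩

end QueryComplexity

section Nisan

variable {ι : Type} [DecidableEq ι] {f : (ι → Bool) → Bool} {x : ι → Bool}

/-- A tree that does not query `B` on `x` answers alike on `x` and on `x ⊕ B`. -/
lemma DTree.correct_add_correct_flipSet_le (T : DTree ι) {B : Finset ι}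
    (hB : f (flipSet x B) ≠ f x) :
    (if T.eval x = f x then 1 else 0) +
        (if T.eval (flipSet x B) = f (flipSet x B) then 1 else 0) ≤
      1 + if Disjoint B (T.queries x) then 0 else 1 := by
  by_cases hdisj : Disjoint B (T.queries x)
  · have := T.eval_flipSet_of_disjoint x hdisj
    split_ifs <;> simp_all
  · split_ifs <;> simp

lemma card_filter_not_disjoint_le {r : ℕ} {B : Fin r → Finset ι} (hB : Pairwise (Disjoint on B))
    (Q : Finset ι) : #{j | ¬Disjoint (B j) Q} ≤ #Q :=
  calc #{j | ¬Disjoint (B j) Q} ≤ ∑ j, #(B j ∩ Q) := by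
        rw [card_eq_sum_ones, sum_filter]
        refine sum_le_sum fun j _ => ?_
        split_ifs with h
        · exact Nat.zero_le _
        · exact card_pos.2 (not_disjoint_iff_nonempty_inter.1 h)
    _ = #(univ.biUnion fun j => B j ∩ Q) :=
        (card_biUnion fun _ _ _ _ hjk => (hB hjk).mono inter_subset_left inter_subset_left).symm
    _ ≤ #Q := card_le_card (biUnion_subset.2 fun _ _ => inter_subset_right)

lemma IsSensFamily.sum_correct_le {r : ℕ} {B : Fin r → Finset ι} (h : IsSensFamily f x B)
    (T : DTree ι) :
    ∑ j, ((if T.eval x = f x then 1 else 0) +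
        if T.eval (flipSet x (B j)) = f (flipSet x (B j)) then 1 else 0) ≤ r + T.depth :=
  calc _ ≤ ∑ j, (1 + if Disjoint (B j) (T.queries x) then 0 else 1) :=
        sum_le_sum fun j _ => T.correct_add_correct_flipSet_le (h.sensitive j)
    _ = r + #{j | ¬Disjoint (B j) (T.queries x)} := by
        simp [sum_add_distrib, sum_ite, card_univ]
    _ ≤ r + T.depth := Nat.add_le_add_left
        ((card_filter_not_disjoint_le h.pairwiseDisjoint _).trans (T.card_queries_le_depth x)) r

/-- Nisan's argument: a tree must query block `B j` whenever it is right on both `x` and `x ⊕ B j`,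
which happens with probability at least `1/3`, yet each tree of depth at most `d` queries at
most `d` of the disjoint blocks. -/
lemma IsSensFamily.le_three_mul {r : ℕ} {B : Fin r → Finset ι} (h : IsSensFamily f x B)
    (μ : PMF (DTree ι)) {d : ℕ} (hdepth : ∀ T ∈ μ.support, T.depth ≤ d)
    (hsucc : ∀ y, (2 / 3 : ℝ≥0∞) ≤ ∑' T : DTree ι, if T.eval y = f y then μ T else 0) :
    r ≤ 3 * d := by
  set P : (ι → Bool) → ℝ≥0∞ := fun y => ∑' T : DTree ι, if T.eval y = f y then μ T else 0
  have htwo : ∀ y, 2 ≤ 3 * P y := fun y => by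
    have := hsucc y
    rwa [ENNReal.div_le_iff_le_mul (by simp) (by simp), mul_comm] at this
  have hpoint : ∀ T, ∑ j, ((if T.eval x = f x then μ T else 0) +
      if T.eval (flipSet x (B j)) = f (flipSet x (B j)) then μ T else 0) ≤ (r + d) * μ T := by
    intro T
    by_cases hT : μ T = 0
    · simp [hT]
    have hcount := (h.sum_correct_le T).trans
      (Nat.add_le_add_left (hdepth T ((PMF.mem_support_iff μ T).2 hT)) r)
    calc _ = ((∑ j, ((if T.eval x = f x then 1 else 0) +
              if T.eval (flipSet x (B j)) = f (flipSet x (B j)) then 1 else 0) : ℕ) : ℝ≥0∞) *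
            μ T := by
          simp only [Nat.cast_sum, Nat.cast_add, Nat.cast_ite, Nat.cast_one, Nat.cast_zero,
            sum_mul, add_mul, ite_mul, one_mul, zero_mul]
      _ ≤ (r + d) * μ T := mul_le_mul_left (by exact_mod_cast hcount) _
  have hsum : ∑ j, (P x + P (flipSet x (B j))) ≤ r + d :=
    calc _ = ∑' T, ∑ j, ((if T.eval x = f x then μ T else 0) +
          if T.eval (flipSet x (B j)) = f (flipSet x (B j)) then μ T else 0) := by
          rw [Summable.tsum_finsetSum fun _ _ => ENNReal.summable]
          simp only [P, ENNReal.tsum_add]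
      _ ≤ ∑' T, (r + d) * μ T := ENNReal.tsum_le_tsum hpoint
      _ = r + d := by rw [ENNReal.tsum_mul_left, μ.tsum_coe, mul_one]
  have : ((4 * r : ℕ) : ℝ≥0∞) ≤ ((3 * (r + d) : ℕ) : ℝ≥0∞) :=
    calc ((4 * r : ℕ) : ℝ≥0∞) = ∑ _j : Fin r, (2 + 2) := by simp; ring
      _ ≤ ∑ j, 3 * (P x + P (flipSet x (B j))) :=
          sum_le_sum fun j _ => by rw [mul_add]; exact add_le_add (htwo _) (htwo _)
      _ ≤ 3 * (r + d) := by rw [← mul_sum]; gcongr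
      _ = ((3 * (r + d) : ℕ) : ℝ≥0∞) := by push_cast; ring
  have := Nat.cast_le.1 this
  omega

end Nisan

section Condensation

variable {ι : Type} [Fintype ι] [DecidableEq ι] {f : (ι → Bool) → Bool} {x : ι → Bool}

lemma IsSensFamily.le_three_mul_Rquery {r : ℕ} {B : Fin r → Finset ι} (h : IsSensFamily f x B) :
    r ≤ 3 * Rquery f :=
  let ⟨μ, hdepth, hsucc⟩ := exists_pmf_Rquery f
  h.le_three_mul μ hdepth hsucc

lemma isSensFamily_singletons_sensAt (f : (ι → Bool) → Bool) (x : ι → Bool) :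
    IsSensFamily f x fun j : Fin (sensAt f x) =>
      {((univ.filter fun i => f (flipSet x {i}) ≠ f x).equivFin.symm j : ι)} :=
  isSensFamily_singletons (by simp)

lemma sens_le_three_mul_Rquery (f : (ι → Bool) → Bool) : sens f ≤ 3 * Rquery f := by
  obtain ⟨x, hx⟩ := exists_sensAt_eq_sens f
  exact hx ▸ (isSensFamily_singletons_sensAt f x).le_three_mul_Rquery

lemma exists_restriction_unsetCard_eq_sens (f : (ι → Bool) → Bool) :
    ∃ ρ, unsetCard ρ = sens f ∧ sens f ≤ 3 * Rquery (restrictBF f ρ) := by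
  obtain ⟨x, hx⟩ := exists_sensAt_eq_sens f
  refine ⟨fixOn x (univ.filter fun i => f (flipSet x {i}) ≠ f x)ᶜ,
    (unsetCard_fixOn_compl _ _).trans hx, hx ▸ ?_⟩
  exact ((isSensFamily_singletons_sensAt f x).restrict fun j =>
    singleton_subset_iff.2 (Finset.coe_mem _)).le_three_mul_Rquery

lemma exists_restriction_of_le_blockSens {k : ℕ} (hk : k ≤ blockSens f) :
    ∃ ρ, unsetCard ρ ≤ k * sens f ∧ k ≤ 3 * Rquery (restrictBF f ρ) := by
  obtain ⟨x, -, hx⟩ := Finset.exists_mem_eq_sup univ univ_nonempty (bsAt f)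
  obtain ⟨B, hB, hcard⟩ := exists_isSensFamily_bsAt_card_le_sens f x
  have hkx : k ≤ bsAt f x := hx ▸ hk
  set C := B ∘ Fin.castLE hkx
  refine ⟨fixOn x (univ.biUnion C)ᶜ, ?_, ?_⟩
  · rw [unsetCard_fixOn_compl]
    calc _ ≤ ∑ j, (C j).card := card_biUnion_le
      _ ≤ ∑ _j : Fin k, sens f := sum_le_sum fun j _ => hcard _
      _ = k * sens f := by simp
  · exact ((hB.comp_castLE hkx).restrict fun j =>
      subset_biUnion_of_mem C (mem_univ j)).le_three_mul_Rquery

lemma exists_restriction_of_pow_three_eq {t : ℝ} (ht0 : 0 ≤ t) (ht : t ^ 3 = Rquery f) :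
    ∃ ρ, (unsetCard ρ : ℝ) ≤ 3 * Rquery f ∧ t ≤ 3 * Rquery (restrictBF f ρ) := by
  by_cases hs : t ≤ sens f
  · obtain ⟨ρ, hρ, hsρ⟩ := exists_restriction_unsetCard_eq_sens f
    exact ⟨ρ, by rw [hρ]; exact_mod_cast sens_le_three_mul_Rquery f,
      hs.trans (by exact_mod_cast hsρ)⟩
  push Not at hs
  have ht1 : 1 ≤ t := by
    have hR : 0 < Rquery f := by exact_mod_cast ht ▸ pow_pos ((Nat.cast_nonneg _).trans_lt hs) 3
    exact le_of_pow_le_pow_left₀ three_ne_zero ht0 (by rw [one_pow, ht]; exact_mod_cast hR)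
  have htb : t ≤ blockSens f := le_of_pow_le_pow_left₀ three_ne_zero (Nat.cast_nonneg _)
    (by rw [ht]; exact_mod_cast Rquery_le_blockSens_pow f)
  obtain ⟨ρ, hρ, hkρ⟩ := exists_restriction_of_le_blockSens (Nat.ceil_le.2 htb)
  refine ⟨ρ, ?_, (Nat.le_ceil t).trans (by exact_mod_cast hkρ)⟩
  calc (unsetCard ρ : ℝ) ≤ ⌈t⌉₊ * sens f := by exact_mod_cast hρ
    _ ≤ (t + 1) * t :=
      mul_le_mul (Nat.ceil_lt_add_one ht0).le hs.le (Nat.cast_nonneg _) (by linarith)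
    _ ≤ 3 * t ^ 3 := by nlinarith [mul_le_mul_of_nonneg_left ht1 (sq_nonneg t)]
    _ = 3 * Rquery f := by rw [ht]

end Condensation

lemma rpow_one_third_pow_three {a : ℝ} (ha : 0 ≤ a) : (a ^ ((1 : ℝ) / 3)) ^ 3 = a := by
  rw [← Real.rpow_natCast, ← Real.rpow_mul ha]; norm_num

/-- for every `f` there is a restriction with `O(R(f))` unset
variables such that `R(f|_ρ) = Ω(R(f)^{1/3})`. -/
theorem R_lossy_condensation :
    ∃ c₁ c₂ : ℝ, 0 < c₁ ∧ 0 < c₂ ∧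
      ∀ (n : ℕ) (f : (Fin n → Bool) → Bool),
        ∃ ρ : Fin n → Option Bool,
          (unsetCard ρ : ℝ) ≤ c₁ * (Rquery f : ℝ) ∧
          c₂ * (Rquery f : ℝ) ^ ((1 : ℝ) / 3) ≤ (Rquery (restrictBF f ρ) : ℝ) := by
  refine ⟨3, 1 / 3, by norm_num, by norm_num, fun n f => ?_⟩
  obtain ⟨ρ, hunset, hρ⟩ := exists_restriction_of_pow_three_eq (by positivity)
    (rpow_one_third_pow_three (Nat.cast_nonneg (Rquery f)))
  exact ⟨ρ, hunset, by linarith⟩
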